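/- In the block panel design, suppose Y = L + W∘τ + E where the rows E_{i·} are independent mean-zero random vectors with common covariance Σ ∈ ℝ^{T×T}. Then for all λ₀ ∈ ℝ and λ ∈ Λ, E ℓ_time(λ₀,λ) = ‖λ₀·1_{N_co} + L_{co,pre}λ_pre − L_{co,post}λ_post‖² + N_co·q(λ_pre), where q(λ_pre) = [λ_pre; −λ_post]'·Σ·[λ_pre; −λ_post]. Moreover, if Σ_{pre,pre} is invertible, then q(λ_pre) = (λ_pre − ψ)'Σ_{pre,pre}(λ_pre − ψ) + c with ψ = Σ_{pre,pre}^{−1}Σ_{pre,post}λ_post and c = λ_post'(Σ_{post,post} − Σ_{post,pre}Σ_{pre,pre}^{−1}Σ_{pre,post})λ_post independent of λ_pre; hence the minimizers of E ℓ_time over ℝ×Λ coincide with the minimizers of ‖λ₀·1_{N_co} + L_{co,pre}λ_pre − L_{co,post}λ_post‖² + N_co‖Σ_{pre,pre}^{1/2}(λ_pre − ψ)‖². -/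

import Mathlib

open Filter MeasureTheory ProbabilityTheory Matrix Real Asymptotics

noncomputable section

namespace SDID

/-- The set Ω of unit weights: nonnegative, control weights sum to one,
treated weights all equal to `1/N_tr`. -/
def OmegaSet (Nco Ntr : ℕ) : Set (Fin (Nco + Ntr) → ℝ) :=
  {w | (∀ i, 0 ≤ w i) ∧ (∑ i : Fin Nco, w (Fin.castAdd Ntr i)) = 1 ∧
    ∀ i : Fin Ntr, w (Fin.natAdd Nco i) = (Ntr : ℝ)⁻¹}

/-- The set Λ of time weights: nonnegative, pre-treatment weights sum to one,
post-treatment weights all equal to `1/T_post`. -/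
def LambdaSet (Tpre Tpost : ℕ) : Set (Fin (Tpre + Tpost) → ℝ) :=
  {l | (∀ t, 0 ≤ l t) ∧ (∑ t : Fin Tpre, l (Fin.castAdd Tpost t)) = 1 ∧
    ∀ t : Fin Tpost, l (Fin.natAdd Tpre t) = (Tpost : ℝ)⁻¹}

/-- Weighted double-differencing estimator
`τ̂(ω,λ) = ω_tr'Y_{tr,post}λ_post − ω_co'Y_{co,post}λ_post − ω_tr'Y_{tr,pre}λ_pre + ω_co'Y_{co,pre}λ_pre`. -/
def tauWDD {Nco Ntr Tpre Tpost : ℕ} (w : Fin (Nco + Ntr) → ℝ) (l : Fin (Tpre + Tpost) → ℝ)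
    (Y : Matrix (Fin (Nco + Ntr)) (Fin (Tpre + Tpost)) ℝ) : ℝ :=
  (∑ i : Fin Ntr, ∑ t : Fin Tpost,
      w (Fin.natAdd Nco i) * Y (Fin.natAdd Nco i) (Fin.natAdd Tpre t) * l (Fin.natAdd Tpre t))
  - (∑ i : Fin Nco, ∑ t : Fin Tpost,
      w (Fin.castAdd Ntr i) * Y (Fin.castAdd Ntr i) (Fin.natAdd Tpre t) * l (Fin.natAdd Tpre t))
  - (∑ i : Fin Ntr, ∑ t : Fin Tpre,
      w (Fin.natAdd Nco i) * Y (Fin.natAdd Nco i) (Fin.castAdd Tpost t) * l (Fin.castAdd Tpost t))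
  + (∑ i : Fin Nco, ∑ t : Fin Tpre,
      w (Fin.castAdd Ntr i) * Y (Fin.castAdd Ntr i) (Fin.castAdd Tpost t) * l (Fin.castAdd Tpost t))

/-- Block treatment assignment indicator `W_{it} = 1{i > N_co, t > T_pre}`. -/
def Wind (Nco Ntr Tpre Tpost : ℕ) : Matrix (Fin (Nco + Ntr)) (Fin (Tpre + Tpost)) ℝ :=
  fun i t => if Nco ≤ (i : ℕ) ∧ Tpre ≤ (t : ℕ) then 1 else 0

/-- Outcome matrix `Y = L + W ∘ τ + E`. -/
def Ymat {Nco Ntr Tpre Tpost : ℕ} (L τm Em : Matrix (Fin (Nco + Ntr)) (Fin (Tpre + Tpost)) ℝ) :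
    Matrix (Fin (Nco + Ntr)) (Fin (Tpre + Tpost)) ℝ :=
  fun i t => L i t + Wind Nco Ntr Tpre Tpost i t * τm i t + Em i t

/-- The estimand: average treatment effect on treated cells. -/
def taubar {Nco Ntr Tpre Tpost : ℕ} (τm : Matrix (Fin (Nco + Ntr)) (Fin (Tpre + Tpost)) ℝ) : ℝ :=
  ((Ntr : ℝ) * Tpost)⁻¹ *
    ∑ i : Fin Ntr, ∑ t : Fin Tpost, τm (Fin.natAdd Nco i) (Fin.natAdd Tpre t)


/-- The synthetic-control time-weight objective `ℓ_time`. -/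
def ellTime {Nco Ntr Tpre Tpost : ℕ}
    (Y : Matrix (Fin (Nco + Ntr)) (Fin (Tpre + Tpost)) ℝ)
    (l0 : ℝ) (l : Fin (Tpre + Tpost) → ℝ) : ℝ :=
  ∑ i : Fin Nco,
    (l0 + (∑ t : Fin Tpre, l (Fin.castAdd Tpost t) * Y (Fin.castAdd Ntr i) (Fin.castAdd Tpost t))
      - (Tpost : ℝ)⁻¹ * ∑ t : Fin Tpost, Y (Fin.castAdd Ntr i) (Fin.natAdd Tpre t)) ^ 2

/-- the signed concatenation `[λ_pre; −λ_post]` of a time-weight vector. -/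
def vstar {Tpre Tpost : ℕ} (l : Fin (Tpre + Tpost) → ℝ) : Fin (Tpre + Tpost) → ℝ :=
  fun t => if (t : ℕ) < Tpre then l t else -(l t)

/-- the quadratic form `q(λ_pre) = [λ_pre; −λ_post]'·Σ·[λ_pre; −λ_post]`. -/
def qform {Tpre Tpost : ℕ} (S : Matrix (Fin (Tpre + Tpost)) (Fin (Tpre + Tpost)) ℝ)
    (l : Fin (Tpre + Tpost) → ℝ) : ℝ :=
  vstar l ⬝ᵥ (S *ᵥ vstar l)

/-- blocks of `Σ`. -/
def Spp {Tpre Tpost : ℕ} (S : Matrix (Fin (Tpre + Tpost)) (Fin (Tpre + Tpost)) ℝ) :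
    Matrix (Fin Tpre) (Fin Tpre) ℝ := S.submatrix (Fin.castAdd Tpost) (Fin.castAdd Tpost)

def Spq {Tpre Tpost : ℕ} (S : Matrix (Fin (Tpre + Tpost)) (Fin (Tpre + Tpost)) ℝ) :
    Matrix (Fin Tpre) (Fin Tpost) ℝ := S.submatrix (Fin.castAdd Tpost) (Fin.natAdd Tpre)

def Sqp {Tpre Tpost : ℕ} (S : Matrix (Fin (Tpre + Tpost)) (Fin (Tpre + Tpost)) ℝ) :
    Matrix (Fin Tpost) (Fin Tpre) ℝ := S.submatrix (Fin.natAdd Tpre) (Fin.castAdd Tpost)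

def Sqq {Tpre Tpost : ℕ} (S : Matrix (Fin (Tpre + Tpost)) (Fin (Tpre + Tpost)) ℝ) :
    Matrix (Fin Tpost) (Fin Tpost) ℝ := S.submatrix (Fin.natAdd Tpre) (Fin.natAdd Tpre)

/-- the autoregression vector `ψ = Σ_{pre,pre}⁻¹ Σ_{pre,post} λ_post` with
`λ_post` the constant vector `1/T_post`. -/
def psiVec {Tpre Tpost : ℕ} (S : Matrix (Fin (Tpre + Tpost)) (Fin (Tpre + Tpost)) ℝ) :
    Fin Tpre → ℝ :=
  (Spp S)⁻¹ *ᵥ (Spq S *ᵥ fun _ : Fin Tpost => (Tpost : ℝ)⁻¹)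

/-- the deterministic surrogate objective for the time weights,
`‖λ₀·1 + L_{co,pre}λ_pre − L_{co,post}λ_post‖² + N_co·(λ_pre − ψ)'Σ_{pre,pre}(λ_pre − ψ)`
(note `‖Σ_{pre,pre}^{1/2}(λ_pre − ψ)‖² = (λ_pre − ψ)'Σ_{pre,pre}(λ_pre − ψ)`). -/
def ellTimeOracle {Nco Ntr Tpre Tpost : ℕ}
    (S : Matrix (Fin (Tpre + Tpost)) (Fin (Tpre + Tpost)) ℝ)
    (L : Matrix (Fin (Nco + Ntr)) (Fin (Tpre + Tpost)) ℝ)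
    (l0 : ℝ) (l : Fin (Tpre + Tpost) → ℝ) : ℝ :=
  (∑ i : Fin Nco,
    (l0 + (∑ t : Fin Tpre, L (Fin.castAdd Ntr i) (Fin.castAdd Tpost t) * l (Fin.castAdd Tpost t))
      - ∑ t : Fin Tpost, L (Fin.castAdd Ntr i) (Fin.natAdd Tpre t) * l (Fin.natAdd Tpre t)) ^ 2)
  + (Nco : ℝ) *
      ((fun s => l (Fin.castAdd Tpost s) - psiVec S s) ⬝ᵥ
        (Spp S *ᵥ fun s => l (Fin.castAdd Tpost s) - psiVec S s))

/-!
On a control row the treatment term vanishes, so the `i`-th summand of `ℓ_time` is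
`(r_i + ⟨[λ_pre; −λ_post], E_i⟩)²` with the deterministic fit residual `r_i`; as `E_i` is centred
with second-moment matrix `Σ`, its expectation is `r_i² + q(λ_pre)`. Reindexing `Fin (T_pre + T_post)`
as `Fin T_pre ⊕ Fin T_post` turns `q` into a block quadratic form in `(λ_pre, −λ_post)`, and the
Schur-complement completion of the square (valid since `Σ` is symmetric, being a second-moment
matrix) gives `q = (λ_pre − ψ)'Σ_{pre,pre}(λ_pre − ψ) + c`. Hence on `ℝ × Λ` the expected objective
and the surrogate differ by the constant `N_co · c` and have the same minimizers.
-/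

section Moments

variable {Ω n : Type*} [MeasurableSpace Ω] {μ : Measure Ω} [Fintype n]

lemma sq_add_dotProduct (a : ℝ) (c x : n → ℝ) :
    (a + c ⬝ᵥ x) ^ 2 = a ^ 2 + ∑ t, 2 * a * c t * x t + ∑ s, ∑ t, c s * c t * (x s * x t) := by
  have hlin : 2 * a * (c ⬝ᵥ x) = ∑ t, 2 * a * c t * x t := by
    simp only [dotProduct, Finset.mul_sum, mul_assoc]
  have hquad : (c ⬝ᵥ x) ^ 2 = ∑ s, ∑ t, c s * c t * (x s * x t) := by
    simp only [sq, dotProduct, Finset.sum_mul_sum, mul_mul_mul_comm]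
  rw [add_sq, hlin, hquad]

lemma integrable_sq_add_dotProduct [IsFiniteMeasure μ] (a : ℝ) (c : n → ℝ) {F : n → Ω → ℝ}
    (hint : ∀ t, Integrable (F t) μ) (hcovint : ∀ s t, Integrable (fun ω => F s ω * F t ω) μ) :
    Integrable (fun ω => (a + c ⬝ᵥ fun t => F t ω) ^ 2) μ := by
  simp only [sq_add_dotProduct]
  exact ((integrable_const _).add (integrable_finsetSum _ fun t _ => (hint t).const_mul _)).add
    (integrable_finsetSum _ fun s _ => integrable_finsetSum _ fun t _ =>
      (hcovint s t).const_mul _)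

lemma integral_sq_add_dotProduct [IsProbabilityMeasure μ] (a : ℝ) (c : n → ℝ)
    {F : n → Ω → ℝ} {S : Matrix n n ℝ}
    (hint : ∀ t, Integrable (F t) μ) (hmean : ∀ t, ∫ ω, F t ω ∂μ = 0)
    (hcovint : ∀ s t, Integrable (fun ω => F s ω * F t ω) μ)
    (hcov : ∀ s t, ∫ ω, F s ω * F t ω ∂μ = S s t) :
    ∫ ω, (a + c ⬝ᵥ fun t => F t ω) ^ 2 ∂μ = a ^ 2 + c ⬝ᵥ (S *ᵥ c) := by
  have hlin : Integrable (fun ω => ∑ t, 2 * a * c t * F t ω) μ :=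
    integrable_finsetSum _ fun t _ => (hint t).const_mul _
  have hconst_lin : Integrable (fun ω => a ^ 2 + ∑ t, 2 * a * c t * F t ω) μ :=
    (integrable_const _).add hlin
  have hquad : ∀ s, Integrable (fun ω => ∑ t, c s * c t * (F s ω * F t ω)) μ :=
    fun s => integrable_finsetSum _ fun t _ => (hcovint s t).const_mul _
  have hquad_sum : Integrable (fun ω => ∑ s, ∑ t, c s * c t * (F s ω * F t ω)) μ :=
    integrable_finsetSum _ fun s _ => hquad s
  simp only [sq_add_dotProduct]
  rw [integral_add hconst_lin hquad_sum, integral_add (integrable_const _) hlin,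
    integral_finsetSum _ fun t _ => (hint t).const_mul _, integral_finsetSum _ fun s _ => hquad s]
  simp only [integral_const, probReal_univ, one_smul, integral_const_mul, hmean, mul_zero,
    Finset.sum_const_zero, add_zero]
  congr 1
  simp only [dotProduct, mulVec, Finset.mul_sum]
  refine Finset.sum_congr rfl fun s _ => ?_
  rw [integral_finsetSum _ fun t _ => (hcovint s t).const_mul _]
  refine Finset.sum_congr rfl fun t _ => ?_
  rw [integral_const_mul, hcov]
  ring

omit [Fintype n] in
lemma isSymm_of_integral_mul_eq {F : n → Ω → ℝ} {S : Matrix n n ℝ}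
    (hcov : ∀ s t, ∫ ω, F s ω * F t ω ∂μ = S s t) : S.IsSymm := by
  ext s t
  rw [transpose_apply, ← hcov, ← hcov]
  simp only [mul_comm]

end Moments

section Blocks

variable {p q : ℕ}

lemma submatrix_finSumFinEquiv (S : Matrix (Fin (p + q)) (Fin (p + q)) ℝ) :
    S.submatrix finSumFinEquiv finSumFinEquiv = fromBlocks (Spp S) (Spq S) (Sqp S) (Sqq S) := by
  ext (s | s) (t | t) <;> rfl

lemma append_comp_finSumFinEquiv (u : Fin p → ℝ) (w : Fin q → ℝ) :
    Fin.append u w ∘ finSumFinEquiv = Sum.elim u w := by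
  ext (s | t) <;> simp

lemma append_dotProduct_mulVec_append (S : Matrix (Fin (p + q)) (Fin (p + q)) ℝ) (hS : S.IsSymm)
    (hA : IsUnit (Spp S).det) (u : Fin p → ℝ) (w : Fin q → ℝ) :
    Fin.append u w ⬝ᵥ (S *ᵥ Fin.append u w)
      = (u + ((Spp S)⁻¹ * Spq S) *ᵥ w) ⬝ᵥ (Spp S *ᵥ (u + ((Spp S)⁻¹ * Spq S) *ᵥ w))
        + w ⬝ᵥ ((Sqq S - Sqp S * (Spp S)⁻¹ * Spq S) *ᵥ w) := by
  have := invertibleOfIsUnitDet (Spp S) hA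
  have hSpp : (Spp S).IsHermitian := isHermitian_iff_isSymm.2 (hS.submatrix _)
  have hSqp : (Spq S)ᴴ = Sqp S := by
    rw [conjTranspose_eq_transpose_of_trivial]
    ext t s
    exact hS.apply _ _
  have hschur := schur_complement_eq₁₁ (Spq S) (Sqq S) u w hSpp
  simp only [star_trivial, hSqp, ← submatrix_finSumFinEquiv, ← dotProduct_mulVec] at hschur
  rw [← hschur, ← append_comp_finSumFinEquiv, submatrix_mulVec_equiv,
    comp_equiv_dotProduct_comp_equiv, Function.comp_assoc, Equiv.self_comp_symm,
    Function.comp_id]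

end Blocks

section TimeWeights

variable {Nco Ntr Tpre Tpost : ℕ}

lemma Ymat_castAdd (L τm Em : Matrix (Fin (Nco + Ntr)) (Fin (Tpre + Tpost)) ℝ) (i : Fin Nco)
    (t : Fin (Tpre + Tpost)) :
    Ymat L τm Em (Fin.castAdd Ntr i) t = L (Fin.castAdd Ntr i) t + Em (Fin.castAdd Ntr i) t := by
  simp [Ymat, Wind]

lemma vstar_eq_append (l : Fin (Tpre + Tpost) → ℝ) :
    vstar l = Fin.append (fun s => l (Fin.castAdd Tpost s)) fun t => -l (Fin.natAdd Tpre t) := by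
  ext t
  refine Fin.addCases (fun s => ?_) (fun s => ?_) t <;> simp [vstar]

lemma vstar_dotProduct (l x : Fin (Tpre + Tpost) → ℝ) :
    vstar l ⬝ᵥ x = ∑ s : Fin Tpre, l (Fin.castAdd Tpost s) * x (Fin.castAdd Tpost s)
      - ∑ t : Fin Tpost, l (Fin.natAdd Tpre t) * x (Fin.natAdd Tpre t) := by
  simp [vstar_eq_append, dotProduct, Fin.sum_univ_add, sub_eq_add_neg]

def timeFitResidual (L : Matrix (Fin (Nco + Ntr)) (Fin (Tpre + Tpost)) ℝ) (l0 : ℝ)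
    (l : Fin (Tpre + Tpost) → ℝ) (i : Fin Nco) : ℝ :=
  l0 + (∑ t : Fin Tpre, L (Fin.castAdd Ntr i) (Fin.castAdd Tpost t) * l (Fin.castAdd Tpost t))
    - ∑ t : Fin Tpost, L (Fin.castAdd Ntr i) (Fin.natAdd Tpre t) * l (Fin.natAdd Tpre t)

lemma ellTime_Ymat (L τm Em : Matrix (Fin (Nco + Ntr)) (Fin (Tpre + Tpost)) ℝ) (l0 : ℝ)
    {l : Fin (Tpre + Tpost) → ℝ} (hl : l ∈ LambdaSet Tpre Tpost) :
    ellTime (Ymat L τm Em) l0 l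
      = ∑ i, (timeFitResidual L l0 l i + vstar l ⬝ᵥ Em (Fin.castAdd Ntr i)) ^ 2 := by
  refine Finset.sum_congr rfl fun i _ => ?_
  simp only [Ymat_castAdd, vstar_dotProduct, timeFitResidual, hl.2.2, mul_add,
    Finset.sum_add_distrib, Finset.mul_sum, mul_comm (L (Fin.castAdd Ntr i) _)]
  ring

lemma integral_ellTime_Ymat {Ω : Type*} [MeasurableSpace Ω] {μ : Measure Ω}
    [IsProbabilityMeasure μ] (L τm : Matrix (Fin (Nco + Ntr)) (Fin (Tpre + Tpost)) ℝ)
    {E : Fin (Nco + Ntr) → Fin (Tpre + Tpost) → Ω → ℝ}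
    {S : Matrix (Fin (Tpre + Tpost)) (Fin (Tpre + Tpost)) ℝ}
    (hint : ∀ i t, Integrable (E i t) μ) (hmean : ∀ i t, ∫ ω, E i t ω ∂μ = 0)
    (hcovint : ∀ i s t, Integrable (fun ω => E i s ω * E i t ω) μ)
    (hcov : ∀ i s t, ∫ ω, E i s ω * E i t ω ∂μ = S s t)
    (l0 : ℝ) {l : Fin (Tpre + Tpost) → ℝ} (hl : l ∈ LambdaSet Tpre Tpost) :
    ∫ ω, ellTime (Ymat L τm (fun i t => E i t ω)) l0 l ∂μ
      = ∑ i, timeFitResidual L l0 l i ^ 2 + Nco * qform S l := by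
  simp_rw [fun ω => ellTime_Ymat L τm (fun i t => E i t ω) l0 hl]
  rw [integral_finsetSum _ fun i _ =>
    integrable_sq_add_dotProduct _ _ (hint (Fin.castAdd Ntr i)) (hcovint (Fin.castAdd Ntr i))]
  simp only [integral_sq_add_dotProduct _ _ (hint _) (hmean _) (hcovint _) (hcov _),
    Finset.sum_add_distrib, Finset.sum_const, Finset.card_univ, Fintype.card_fin, nsmul_eq_mul,
    qform]

lemma qform_eq_schur {S : Matrix (Fin (Tpre + Tpost)) (Fin (Tpre + Tpost)) ℝ} (hS : S.IsSymm)
    (hA : IsUnit (Spp S).det) {l : Fin (Tpre + Tpost) → ℝ} (hl : l ∈ LambdaSet Tpre Tpost) :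
    qform S l
      = ((fun s => l (Fin.castAdd Tpost s) - psiVec S s) ⬝ᵥ
          (Spp S *ᵥ fun s => l (Fin.castAdd Tpost s) - psiVec S s))
        + ((fun _ : Fin Tpost => (Tpost : ℝ)⁻¹) ⬝ᵥ
            ((Sqq S - Sqp S * (Spp S)⁻¹ * Spq S) *ᵥ fun _ : Fin Tpost => (Tpost : ℝ)⁻¹)) := by
  have hpost : (fun t => -l (Fin.natAdd Tpre t)) = -fun _ : Fin Tpost => (Tpost : ℝ)⁻¹ := by
    ext t
    simp [hl.2.2 t]
  have hψ : ((Spp S)⁻¹ * Spq S) *ᵥ (-fun _ : Fin Tpost => (Tpost : ℝ)⁻¹) = -psiVec S := by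
    rw [mulVec_neg, ← mulVec_mulVec, psiVec]
  rw [qform, vstar_eq_append, hpost, append_dotProduct_mulVec_append S hS hA, hψ, mulVec_neg,
    neg_dotProduct, dotProduct_neg, neg_neg]
  rfl

end TimeWeights

lemma isMinOn_iff_of_sub_eq {α β : Type*} [AddCommGroup β] [PartialOrder β]
    [IsOrderedAddMonoid β] {f g : α → β} {s : Set α} {a : α}
    (hfg : ∀ x ∈ s, f x - g x = f a - g a) :
    IsMinOn f s a ↔ IsMinOn g s a := by
  simp only [isMinOn_iff]
  refine forall₂_congr fun x hx => ?_
  rw [← sub_nonneg, sub_eq_sub_iff_sub_eq_sub.mp (hfg x hx), sub_nonneg]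

theorem expected_time_objective_general {Nco Ntr Tpre Tpost : ℕ}
    (hNtr : 1 ≤ Ntr)
    {Ωt : Type*} [MeasurableSpace Ωt] (μ : Measure Ωt) [IsProbabilityMeasure μ]
    (L τm : Matrix (Fin (Nco + Ntr)) (Fin (Tpre + Tpost)) ℝ)
    (E : Fin (Nco + Ntr) → Fin (Tpre + Tpost) → Ωt → ℝ)
    (S : Matrix (Fin (Tpre + Tpost)) (Fin (Tpre + Tpost)) ℝ)
    (hint : ∀ i t, Integrable (E i t) μ)
    (hmean : ∀ i t, ∫ ω, E i t ω ∂μ = 0)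
    (hcovint : ∀ i s t, Integrable (fun ω => E i s ω * E i t ω) μ)
    (hcov : ∀ i s t, ∫ ω, E i s ω * E i t ω ∂μ = S s t) :
    (∀ (l0 : ℝ) (l : Fin (Tpre + Tpost) → ℝ), l ∈ LambdaSet Tpre Tpost →
      ∫ ω, ellTime (Ymat L τm (fun i t => E i t ω)) l0 l ∂μ
        = (∑ i : Fin Nco,
            (l0 + (∑ t : Fin Tpre,
                L (Fin.castAdd Ntr i) (Fin.castAdd Tpost t) * l (Fin.castAdd Tpost t))
              - ∑ t : Fin Tpost,
                L (Fin.castAdd Ntr i) (Fin.natAdd Tpre t) * l (Fin.natAdd Tpre t)) ^ 2)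
          + (Nco : ℝ) * qform S l) ∧
    (IsUnit (Spp S).det →
      ((∀ l : Fin (Tpre + Tpost) → ℝ, l ∈ LambdaSet Tpre Tpost →
        qform S l
          = ((fun s => l (Fin.castAdd Tpost s) - psiVec S s) ⬝ᵥ
              (Spp S *ᵥ fun s => l (Fin.castAdd Tpost s) - psiVec S s))
            + ((fun _ : Fin Tpost => (Tpost : ℝ)⁻¹) ⬝ᵥ
                ((Sqq S - Sqp S * (Spp S)⁻¹ * Spq S) *ᵥ fun _ : Fin Tpost => (Tpost : ℝ)⁻¹))) ∧
       (∀ p : ℝ × (Fin (Tpre + Tpost) → ℝ), p.2 ∈ LambdaSet Tpre Tpost →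
        (IsMinOn (fun q : ℝ × (Fin (Tpre + Tpost) → ℝ) =>
            ∫ ω, ellTime (Ymat L τm (fun i t => E i t ω)) q.1 q.2 ∂μ)
          {q : ℝ × (Fin (Tpre + Tpost) → ℝ) | q.2 ∈ LambdaSet Tpre Tpost} p
         ↔ IsMinOn (fun q : ℝ × (Fin (Tpre + Tpost) → ℝ) => ellTimeOracle S L q.1 q.2)
          {q : ℝ × (Fin (Tpre + Tpost) → ℝ) | q.2 ∈ LambdaSet Tpre Tpost} p)))) := by
  have hexp := fun l0 l (hl : l ∈ LambdaSet Tpre Tpost) =>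
    integral_ellTime_Ymat L τm hint hmean hcovint hcov l0 hl
  refine ⟨hexp, fun hA => ?_⟩
  have hS : S.IsSymm := isSymm_of_integral_mul_eq (hcov (Fin.natAdd Nco ⟨0, hNtr⟩))
  have hq := fun l (hl : l ∈ LambdaSet Tpre Tpost) => qform_eq_schur hS hA hl
  refine ⟨hq, fun p hp => isMinOn_iff_of_sub_eq fun x hx => ?_⟩
  rw [hexp x.1 x.2 hx, hexp p.1 p.2 hp, hq x.2 hx, hq p.2 hp]
  simp only [ellTimeOracle, timeFitResidual]
  ring

/-- with independent mean-zero rows of common covariance `Σ`,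
`E ℓ_time(λ₀,λ) = ‖λ₀·1 + L_{co,pre}λ_pre − L_{co,post}λ_post‖² + N_co·q(λ_pre)` with
`q(λ_pre) = [λ_pre;−λ_post]'Σ[λ_pre;−λ_post]`; moreover if `Σ_{pre,pre}` is invertible
then `q(λ_pre) = (λ_pre−ψ)'Σ_{pre,pre}(λ_pre−ψ) + c` with
`ψ = Σ_{pre,pre}⁻¹Σ_{pre,post}λ_post` and
`c = λ_post'(Σ_{post,post} − Σ_{post,pre}Σ_{pre,pre}⁻¹Σ_{pre,post})λ_post`, and hence the
minimizers of `E ℓ_time` over `ℝ×Λ` coincide with those of the surrogate objective. -/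
theorem expected_time_objective {Nco Ntr Tpre Tpost : ℕ}
    (hNtr : 1 ≤ Ntr) (hTpost : 1 ≤ Tpost)
    {Ωt : Type*} [MeasurableSpace Ωt] (μ : Measure Ωt) [IsProbabilityMeasure μ]
    (L τm : Matrix (Fin (Nco + Ntr)) (Fin (Tpre + Tpost)) ℝ)
    (E : Fin (Nco + Ntr) → Fin (Tpre + Tpost) → Ωt → ℝ)
    (S : Matrix (Fin (Tpre + Tpost)) (Fin (Tpre + Tpost)) ℝ)
    (hmeas : ∀ i t, Measurable (E i t))
    (hrowindep : iIndepFun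
      (fun (i : Fin (Nco + Ntr)) (ω : Ωt) => fun t => E i t ω) μ)
    (hint : ∀ i t, Integrable (E i t) μ)
    (hmean : ∀ i t, ∫ ω, E i t ω ∂μ = 0)
    (hcovint : ∀ i s t, Integrable (fun ω => E i s ω * E i t ω) μ)
    (hcov : ∀ i s t, ∫ ω, E i s ω * E i t ω ∂μ = S s t) :
    (∀ (l0 : ℝ) (l : Fin (Tpre + Tpost) → ℝ), l ∈ LambdaSet Tpre Tpost →
      ∫ ω, ellTime (Ymat L τm (fun i t => E i t ω)) l0 l ∂μ
        = (∑ i : Fin Nco,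
            (l0 + (∑ t : Fin Tpre,
                L (Fin.castAdd Ntr i) (Fin.castAdd Tpost t) * l (Fin.castAdd Tpost t))
              - ∑ t : Fin Tpost,
                L (Fin.castAdd Ntr i) (Fin.natAdd Tpre t) * l (Fin.natAdd Tpre t)) ^ 2)
          + (Nco : ℝ) * qform S l) ∧
    (IsUnit (Spp S).det →
      ((∀ l : Fin (Tpre + Tpost) → ℝ, l ∈ LambdaSet Tpre Tpost →
        qform S l
          = ((fun s => l (Fin.castAdd Tpost s) - psiVec S s) ⬝ᵥ
              (Spp S *ᵥ fun s => l (Fin.castAdd Tpost s) - psiVec S s))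
            + ((fun _ : Fin Tpost => (Tpost : ℝ)⁻¹) ⬝ᵥ
                ((Sqq S - Sqp S * (Spp S)⁻¹ * Spq S) *ᵥ fun _ : Fin Tpost => (Tpost : ℝ)⁻¹))) ∧
       (∀ p : ℝ × (Fin (Tpre + Tpost) → ℝ), p.2 ∈ LambdaSet Tpre Tpost →
        (IsMinOn (fun q : ℝ × (Fin (Tpre + Tpost) → ℝ) =>
            ∫ ω, ellTime (Ymat L τm (fun i t => E i t ω)) q.1 q.2 ∂μ)
          {q : ℝ × (Fin (Tpre + Tpost) → ℝ) | q.2 ∈ LambdaSet Tpre Tpost} p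
         ↔ IsMinOn (fun q : ℝ × (Fin (Tpre + Tpost) → ℝ) => ellTimeOracle S L q.1 q.2)
          {q : ℝ × (Fin (Tpre + Tpost) → ℝ) | q.2 ∈ LambdaSet Tpre Tpost} p)))) :=
  expected_time_objective_general hNtr μ L τm E S hint hmean hcovint hcov

end SDID
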